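/- Let $\mathcal{D}$ be a triangulated K3 category with a stability condition $\sigma$, and let $f$ be an exact autoequivalence of $\mathcal{D}$ that fixes (up to isomorphism) every $\sigma$-stable spherical object. Suppose every rigid object $E$ admits a filtration $E_1 \to E_2 \to \cdots \to E_n = E$ with cones $A_i^{\oplus m_i}$ where each $A_i$ is a $\sigma$-stable spherical object and $\operatorname{Hom}(E_i, A_{i+1}) = 0$. Then $f(E) \cong E$ for every rigid object $E$. -/

import Mathlib

open CategoryTheory Limits Pretriangulated Module

/-- (The slicing of) a Bridgeland stability condition: full subcategories `P φ` of
semistable objects of phase `φ`, compatible with the shift and with no morphisms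
from higher to lower phase. -/
structure Slicing (C : Type*) [Category C] [Preadditive C]
    [HasZeroObject C] [HasShift C ℤ] [∀ n : ℤ, (CategoryTheory.shiftFunctor C n).Additive]
    [Pretriangulated C] where
  /-- the semistable objects of phase `φ` -/
  P : ℝ → Set C
  /-- closure under isomorphisms -/
  iso_mem : ∀ (φ : ℝ) (A B : C), (A ≅ B) → A ∈ P φ → B ∈ P φ
  /-- compatibility with the shift: `P (φ)[n] = P (φ + n)` -/
  shift_mem : ∀ (φ : ℝ) (n : ℤ) (A : C), A ∈ P φ → (A⟦n⟧ : C) ∈ P (φ + n)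
  /-- no morphisms from higher phase to lower phase -/
  hom_vanish : ∀ (φ₁ φ₂ : ℝ), φ₁ > φ₂ → ∀ A ∈ P φ₁, ∀ B ∈ P φ₂, ∀ f : A ⟶ B, f = 0

variable {C : Type*} [Category C] [Preadditive C]
  [HasZeroObject C] [HasShift C ℤ] [∀ n : ℤ, (CategoryTheory.shiftFunctor C n).Additive]
  [Pretriangulated C]

/-- `A` is `σ`-stable of phase `φ`: it is a nonzero semistable object of phase `φ`
which is a simple object of `P(φ)`, i.e. every mono of `P(φ)` into `A` is either
zero or an isomorphism. -/
def IsStableOfPhase (σ : Slicing C) (A : C) (φ : ℝ) : Prop :=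
  A ∈ σ.P φ ∧ ¬ IsZero A ∧
    ∀ B : C, B ∈ σ.P φ → ∀ g : B ⟶ A,
      (∀ W : C, W ∈ σ.P φ → ∀ h : W ⟶ B, h ≫ g = 0 → h = 0) →
      g = 0 ∨ IsIso g

variable (k : Type*) [Field k] [Linear k C]

/-- A spherical object: `Hom(E, E[i])` is one-dimensional for `i = 0, 2` and zero otherwise. -/
def IsSpherical (E : C) : Prop :=
  finrank k (E ⟶ E⟦(0 : ℤ)⟧) = 1 ∧ finrank k (E ⟶ E⟦(2 : ℤ)⟧) = 1 ∧
    ∀ i : ℤ, i ≠ 0 → i ≠ 2 → ∀ φ : E ⟶ E⟦i⟧, φ = 0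

/-- A rigid object: `Hom(E, E[1]) = 0`. -/
def IsRigid (E : C) : Prop := ∀ φ : E ⟶ E⟦(1 : ℤ)⟧, φ = 0

/-!
Applying `f` to the filtration of a rigid `E` gives a filtration of `f E` by the images
`f Eᵢ`, with the same factors `Aᵢ^{⊕ mᵢ}` up to isomorphism. By induction along the filtration
it therefore suffices to know that a cone is determined by its two ends once it is rigid. All
`Eᵢ` are rigid: descending along the filtration, this follows from `Hom(Eᵢ, Aᵢ₊₁) = 0` and its
Serre dual `Hom(Aᵢ₊₁, Eᵢ[2]) = 0`.

For a triangle `X → Y → Z →w X[1]` with `Hom(X, Z) = 0` and `Y` rigid, the long exact sequences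
write every `ξ : Z → X[1]` as `η ≫ w + w ≫ ρ`: the orbit map of `Aut Z × Aut X[1]` at `w` has
surjective differential, so the orbit of `w` is open in the finite-dimensional space
`Hom(Z, X[1])`. On the complex line through two such morphisms the differential is surjective
away from finitely many points, and the complement of finitely many points of `ℂ` is connected,
so both lie in one orbit; conjugate connecting morphisms have isomorphic cones.
-/

open Filter Topology Function

section UnitsOrbitRel

variable {R S M : Type*} [Monoid R] [Monoid S] [MulAction R M] [MulAction S M]
  [SMulCommClass R S M]

variable (R S) in
def UnitsOrbitRel (v w : M) : Prop := ∃ (a : Rˣ) (s : Sˣ), w = (a : R) • (s : S) • v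

theorem UnitsOrbitRel.symm {v w : M} (h : UnitsOrbitRel R S v w) : UnitsOrbitRel R S w v := by
  obtain ⟨a, s, rfl⟩ := h
  refine ⟨a⁻¹, s⁻¹, ?_⟩
  rw [← smul_comm (a : R) (↑s⁻¹ : S), ← mul_smul, ← mul_smul, Units.inv_mul, Units.inv_mul,
    one_smul, one_smul]

theorem UnitsOrbitRel.trans {u v w : M} (h : UnitsOrbitRel R S u v)
    (h' : UnitsOrbitRel R S v w) : UnitsOrbitRel R S u w := by
  obtain ⟨a, s, rfl⟩ := h
  obtain ⟨b, t, rfl⟩ := h'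
  refine ⟨b * a, t * s, ?_⟩
  rw [Units.val_mul, Units.val_mul, mul_smul, mul_smul, smul_comm (a : R) (t : S)]

end UnitsOrbitRel

theorem eventually_isUnit_one_add {R V : Type*} [Ring R] [Algebra ℂ R] [FiniteDimensional ℂ R]
    [NormedAddCommGroup V] [NormedSpace ℂ V] [FiniteDimensional ℂ V] (g : V →ₗ[ℂ] R) :
    ∀ᶠ x in 𝓝 0, IsUnit (1 + g x) := by
  let b := Module.finBasis ℂ R
  let mat : V →ₗ[ℂ] Matrix _ _ ℂ :=
    (LinearMap.toMatrix b b).toLinearMap ∘ₗ (Algebra.lmul ℂ R).toLinearMap ∘ₗ g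
  have hcont : Continuous fun x => (LinearMap.toMatrix b b (Algebra.lmul ℂ R (1 + g x))).det := by
    simp only [map_add]
    exact (continuous_const.add mat.continuous_of_finiteDimensional).matrix_det
  have hne : ∀ᶠ x in 𝓝 0, (LinearMap.toMatrix b b (Algebra.lmul ℂ R (1 + g x))).det ≠ 0 :=
    hcont.continuousAt.eventually_ne (by
      rw [map_zero, add_zero, map_one, LinearMap.det_toMatrix, map_one]; exact one_ne_zero)
  filter_upwards [hne] with x hx
  rwa [LinearMap.det_toMatrix, ← isUnit_iff_ne_zero, ← LinearMap.isUnit_iff_isUnit_det,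
    Algebra.lmul_isUnit_iff] at hx

theorem LinearMap.finite_setOf_not_surjective_add_smul {K V W : Type*} [Field K] [AddCommGroup V]
    [Module K V] [AddCommGroup W] [Module K W] [FiniteDimensional K W] {A : V →ₗ[K] W}
    (hA : Surjective A) (B : V →ₗ[K] W) : {t : K | ¬ Surjective (A + t • B)}.Finite := by
  obtain ⟨j, hj⟩ := A.exists_rightInverse_of_surjective (LinearMap.range_eq_top.mpr hA)
  refine ((Module.End.finite_hasEigenvalue (B ∘ₗ j)).image fun μ : K => -μ⁻¹).subset ?_
  intro t ht
  have hnotinj : ¬ Injective (LinearMap.id + t • (B ∘ₗ j) : W →ₗ[K] W) := by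
    rw [LinearMap.injective_iff_surjective]
    intro hsurj
    refine ht fun w => ?_
    obtain ⟨x, rfl⟩ := hsurj w
    exact ⟨j x, by simpa using congr($hj x)⟩
  obtain ⟨x, hx, hx0⟩ : ∃ x, x + t • B (j x) = 0 ∧ x ≠ 0 := by
    simpa [injective_iff_map_eq_zero] using hnotinj
  have ht0 : t ≠ 0 := by rintro rfl; simp_all
  refine ⟨-t⁻¹, Module.End.hasEigenvalue_of_hasEigenvector ⟨?_, hx0⟩, by simp⟩
  rw [Module.End.mem_eigenspace_iff, LinearMap.comp_apply, neg_smul, ← smul_neg,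
    ← eq_neg_of_add_eq_zero_right hx, inv_smul_smul₀ ht0]

theorem map_nhds_zero_add_add_bilinear_self {𝕜 V : Type*} [NontriviallyNormedField 𝕜]
    [NormedAddCommGroup V] [NormedSpace 𝕜 V] [CompleteSpace V] (a : V) (q : V →L[𝕜] V →L[𝕜] V) :
    map (fun x => a + x + q x x) (𝓝 0) = 𝓝 a := by
  have hq := q.hasStrictFDerivAt_of_bilinear (hasStrictFDerivAt_id 0) (hasStrictFDerivAt_id 0)
  have hderiv : HasStrictFDerivAt (fun x => a + x + q x x)
      (ContinuousLinearEquiv.refl 𝕜 V : V →L[𝕜] V) 0 :=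
    (((hasStrictFDerivAt_const a 0).add (hasStrictFDerivAt_id 0)).add hq).congr_fderiv
      (by ext; simp)
  simpa using hderiv.map_nhds_eq_of_equiv

section OrbitTangent

variable {R S M : Type*} [Ring R] [Algebra ℂ R] [Ring S] [Algebra ℂ S]
  [AddCommGroup M] [Module ℂ M] [Module R M] [Module S M]
  [IsScalarTower ℂ R M] [IsScalarTower ℂ S M]

variable (R S) in
/-- The differential at `(1, 1)` of the orbit map `(a, s) ↦ a • s • v`. -/
def orbitTangent : M →ₗ[ℂ] R × S →ₗ[ℂ] M :=
  LinearMap.mk₂ ℂ (fun v p => p.1 • v + p.2 • v)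
    (fun _ _ _ => by simp only [smul_add]; abel)
    (fun _ _ _ => by simp only [smul_comm _ (_ : ℂ), smul_add])
    (fun _ _ _ => by simp only [Prod.fst_add, Prod.snd_add, add_smul]; abel)
    (fun _ _ _ => by simp only [Prod.smul_fst, Prod.smul_snd, smul_assoc, smul_add])

@[simp]
theorem orbitTangent_apply (v : M) (p : R × S) : orbitTangent R S v p = p.1 • v + p.2 • v := rfl

variable [FiniteDimensional ℂ R] [FiniteDimensional ℂ S] [FiniteDimensional ℂ M]

theorem eventually_unitsOrbitRel_add_smul {v : M} (hv : Surjective (orbitTangent R S v)) (d : M) :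
    ∀ᶠ t : ℂ in 𝓝 0, UnitsOrbitRel R S v (v + t • d) := by
  let e := (Module.finBasis ℂ M).equivFun
  obtain ⟨j, hj⟩ := (orbitTangent R S v).exists_rightInverse_of_surjective
    (LinearMap.range_eq_top.mpr hv)
  let ι := j ∘ₗ e.symm.toLinearMap
  have hι : ∀ x, orbitTangent R S v (ι x) = e.symm x := fun x =>
    LinearMap.congr_fun hj (e.symm x)
  let q₀ : _ →ₗ[ℂ] _ →ₗ[ℂ] _ := LinearMap.mk₂ ℂ (fun x y => e ((ι x).1 • (ι y).2 • v))
    (fun _ _ _ => by simp [add_smul])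
    (fun _ _ _ => by simp [smul_assoc])
    (fun _ _ _ => by simp [add_smul, smul_add])
    (fun _ _ _ => by simp [smul_comm _ (_ : ℂ)])
  let q := LinearMap.toContinuousLinearMap
    ((LinearMap.toContinuousLinearMap : _ ≃ₗ[ℂ] _).toLinearMap ∘ₗ q₀)
  -- in the coordinates `e`, `x ↦ (1 + (ι x).1) • (1 + (ι x).2) • v` is `x ↦ e v + x + q x x`
  have hF : ∀ x, e.symm (e v + x + q x x) = (1 + (ι x).1) • (1 + (ι x).2) • v := by
    intro x
    have := hι x
    simp only [orbitTangent_apply] at this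
    simp only [q, q₀, LinearMap.coe_toContinuousLinearMap', LinearMap.coe_comp,
      LinearEquiv.coe_coe, comp_apply, LinearMap.mk₂_apply, map_add,
      LinearEquiv.symm_apply_apply, ← this, add_smul, one_smul, smul_add]
    abel
  have hunits : ∀ᶠ x in 𝓝 0, IsUnit (1 + (ι x).1) ∧ IsUnit (1 + (ι x).2) :=
    (eventually_isUnit_one_add (LinearMap.fst ℂ R S ∘ₗ ι)).and
      (eventually_isUnit_one_add (LinearMap.snd ℂ R S ∘ₗ ι))
  have himage : ∀ᶠ y in 𝓝 (e v),
      ∃ x, (IsUnit (1 + (ι x).1) ∧ IsUnit (1 + (ι x).2)) ∧ e v + x + q x x = y := by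
    rw [← map_nhds_zero_add_add_bilinear_self (e v) q]
    exact image_mem_map hunits
  have hline : Tendsto (fun t : ℂ => e (v + t • d)) (𝓝 0) (𝓝 (e v)) := by
    have : Continuous fun t : ℂ => e (v + t • d) := by
      simp only [map_add, map_smul]
      fun_prop
    simpa using this.tendsto 0
  filter_upwards [hline.eventually himage] with t ⟨x, ⟨ha, hs⟩, hx⟩
  refine ⟨ha.unit, hs.unit, ?_⟩
  rw [IsUnit.unit_spec, IsUnit.unit_spec, ← hF, hx, LinearEquiv.symm_apply_apply]

theorem unitsOrbitRel_of_surjective_orbitTangent [SMulCommClass R S M] {w w' : M}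
    (hw : Surjective (orbitTangent R S w)) (hw' : Surjective (orbitTangent R S w')) :
    UnitsOrbitRel R S w w' := by
  let γ : ℂ → M := fun t => w + t • (w' - w)
  have hγ : ∀ t t', γ t' = γ t + (t' - t) • (w' - w) := fun t t' => by
    simp only [γ, sub_smul]; abel
  let good := {t : ℂ | Surjective (orbitTangent R S (γ t))}
  have hgood : IsPreconnected good := by
    have hfin : goodᶜ.Finite := by
      simpa [good, γ, Set.compl_ofPred] using
        LinearMap.finite_setOf_not_surjective_add_smul hw (orbitTangent R S (w' - w))
    simpa using (hfin.countable.isConnected_compl_of_one_lt_rank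
      (by simp [Complex.rank_real_complex])).isPreconnected
  have h0 : (0 : ℂ) ∈ good := by simpa [good, γ] using hw
  have h1 : (1 : ℂ) ∈ good := by simpa [good, γ] using hw'
  have := hgood.induction₂ (fun t t' => UnitsOrbitRel R S (γ t) (γ t'))
    (fun t ht => by
      have hsub : Tendsto (fun t' => t' - t) (𝓝[good] t) (𝓝 0) :=
        tendsto_sub_nhds_zero_iff.mpr nhdsWithin_le_nhds
      filter_upwards [hsub.eventually (eventually_unitsOrbitRel_add_smul ht (w' - w))] with t' h
      rwa [hγ t t'])
    (fun _ _ _ _ _ _ => UnitsOrbitRel.trans) (fun _ _ _ _ => UnitsOrbitRel.symm) h0 h1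
  simpa [γ] using this

end OrbitTangent

section EndActions

variable {D : Type*} [Category D] [Preadditive D]

instance (X Y : D) : SMulCommClass (End X)ᵐᵒᵖ (End Y) (X ⟶ Y) :=
  ⟨fun _ _ _ => (Category.assoc _ _ _).symm⟩

variable {K : Type*} [Semiring K] [Linear K D]

instance (X Y : D) : IsScalarTower K (End X)ᵐᵒᵖ (X ⟶ Y) :=
  ⟨fun _ _ _ => Linear.smul_comp _ _ _ _ _ _⟩

instance (X Y : D) : IsScalarTower K (End Y) (X ⟶ Y) :=
  ⟨fun _ _ _ => Linear.comp_smul _ _ _ _ _ _⟩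

instance (X : D) [Module.Finite K (X ⟶ X)] : Module.Finite K (End X) := ‹_›

end EndActions

theorem nonempty_arrow_iso_of_unitsOrbitRel {D : Type*} [Category D] [Preadditive D] {X Y : D}
    {g g' : X ⟶ Y} (h : UnitsOrbitRel (End X)ᵐᵒᵖ (End Y) g g') :
    Nonempty (Arrow.mk g ≅ Arrow.mk g') := by
  obtain ⟨a, s, rfl⟩ := h
  let e₁ := (Aut.unitsEndEquivAut X (Units.opEquiv a).unop).symm
  refine ⟨Arrow.isoMk e₁ (Aut.unitsEndEquivAut Y s) ?_⟩
  change e₁.hom ≫ e₁.inv ≫ g ≫ (s : End Y) = g ≫ (s : End Y)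
  rw [e₁.hom_inv_id_assoc]

section Rigid

variable {D D' : Type*} [Category D] [Preadditive D] [HasShift D ℤ] [Category D']
  [Preadditive D'] [HasShift D' ℤ]

theorem IsRigid.of_iso {X Y : D} (e : X ≅ Y) (h : IsRigid X) : IsRigid Y := fun φ => by
  simpa [← Functor.map_comp] using
    congr(e.inv ≫ $(h (e.hom ≫ φ ≫ e.inv⟦(1 : ℤ)⟧')) ≫ e.hom⟦(1 : ℤ)⟧')

theorem IsRigid.map {X : D} (h : IsRigid X) (F : D ⥤ D') [F.CommShift ℤ] [F.Full]
    [F.PreservesZeroMorphisms] : IsRigid (F.obj X) := fun φ => by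
  obtain ⟨ψ, hψ⟩ := F.map_surjective (φ ≫ (F.commShiftIso (1 : ℤ)).inv.app X)
  rw [h ψ, F.map_zero] at hψ
  simpa using congr($hψ ≫ (F.commShiftIso (1 : ℤ)).hom.app X).symm

end Rigid

instance {D J : Type*} [Category D] [HasZeroMorphisms D] (f : J → D) [HasBiproduct f] (X : D)
    [∀ j, Subsingleton (X ⟶ f j)] : Subsingleton (X ⟶ ⨁ f) :=
  ⟨fun _ _ => biproduct.hom_ext _ _ fun _ => Subsingleton.elim _ _⟩

theorem subsingleton_shift_hom_of_serre {D : Type*} [Category D] [Preadditive D] [HasShift D ℤ]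
    [Linear ℂ D] [∀ X Y : D, FiniteDimensional ℂ (X ⟶ Y)]
    (hSerre : ∀ (X Y : D) (i : ℤ), finrank ℂ (X ⟶ Y⟦i⟧) = finrank ℂ (Y ⟶ X⟦2 - i⟧))
    {X Z : D} [hXZ : Subsingleton (X ⟶ Z)] : Subsingleton (Z⟦(-1 : ℤ)⟧ ⟶ X⟦(1 : ℤ)⟧) := by
  have : Subsingleton (X ⟶ Z⟦(-1 : ℤ)⟧⟦(1 : ℤ)⟧) :=
    Equiv.subsingleton (β := X ⟶ Z)
      ((Iso.refl X).homCongr ((shiftFunctorCompIsoId D (-1 : ℤ) 1 (by norm_num)).app Z))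
  rw [← finrank_zero_iff (R := ℂ), hSerre, show (2 : ℤ) - 1 = 1 by norm_num]
  exact finrank_zero_of_subsingleton

namespace CategoryTheory.Pretriangulated

theorem isRigid_obj₁_of_distinguished (T : Triangle C) (hT : T ∈ distTriang C)
    [hXZ : Subsingleton (T.obj₁ ⟶ T.obj₃)]
    [hZX : Subsingleton (T.obj₃⟦(-1 : ℤ)⟧ ⟶ T.obj₁⟦(1 : ℤ)⟧)]
    (hY : IsRigid T.obj₂) : IsRigid T.obj₁ := fun φ => by
  have h0 : T.invRotate.mor₁ ≫ φ = 0 :=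
    Subsingleton.elim (α := T.obj₃⟦(-1 : ℤ)⟧ ⟶ T.obj₁⟦(1 : ℤ)⟧) _ _
  obtain ⟨β, hβ⟩ := Triangle.yoneda_exact₂ _ (inv_rot_of_distTriang _ hT) (φ ≫ T.mor₁⟦(1 : ℤ)⟧')
    ((Category.assoc _ _ _).symm.trans ((h0 =≫ _).trans zero_comp))
  obtain ⟨g, rfl⟩ := Triangle.coyoneda_exact₁ _ hT φ (hβ.trans (by rw [hY β]; exact comp_zero))
  rw [Subsingleton.elim g 0, zero_comp]

theorem nonempty_iso_obj₂_of_arrow_iso_mor₃ (T T' : Triangle C) (hT : T ∈ distTriang C)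
    (hT' : T' ∈ distTriang C) (e : Arrow.mk T.mor₃ ≅ Arrow.mk T'.mor₃) :
    Nonempty (T.obj₂ ≅ T'.obj₂) := by
  obtain ⟨e', -⟩ := exists_iso_of_arrow_iso _ _ (rot_of_distTriang _ (rot_of_distTriang _ hT))
    (rot_of_distTriang _ (rot_of_distTriang _ hT')) e
  exact ⟨(shiftFunctor C (1 : ℤ)).preimageIso (Triangle.π₃.mapIso e')⟩

variable [Linear ℂ C]

theorem surjective_orbitTangent_mor₃ (T : Triangle C) (hT : T ∈ distTriang C)
    [hXZ : Subsingleton (T.obj₁ ⟶ T.obj₃)] (hY : IsRigid T.obj₂) :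
    Surjective (orbitTangent (End T.obj₃)ᵐᵒᵖ (End (T.obj₁⟦(1 : ℤ)⟧)) T.mor₃) := fun ξ => by
  obtain ⟨ζ, hζ⟩ := Triangle.coyoneda_exact₁ _ hT (T.mor₂ ≫ ξ) (by rw [Category.assoc]; exact hY _)
  obtain ⟨η, hη⟩ := Triangle.yoneda_exact₂ _ hT ζ (Subsingleton.elim _ _)
  obtain ⟨ρ, hρ⟩ := Triangle.yoneda_exact₃ _ hT (ξ - η ≫ T.mor₃)
    (by rw [Preadditive.comp_sub, ← Category.assoc, ← hη, ← hζ, sub_self])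
  exact ⟨(MulOpposite.op η, ρ), by
    change η ≫ T.mor₃ + T.mor₃ ≫ ρ = ξ
    rw [← hρ, add_sub_cancel]⟩

theorem nonempty_iso_obj₂_of_isRigid [∀ X Y : C, FiniteDimensional ℂ (X ⟶ Y)] (T T' : Triangle C)
    (hT : T ∈ distTriang C) (hT' : T' ∈ distTriang C) (e₁ : T.obj₁ ≅ T'.obj₁)
    (e₃ : T.obj₃ ≅ T'.obj₃) [hXZ : Subsingleton (T.obj₁ ⟶ T.obj₃)] (hY : IsRigid T.obj₂)
    (hY' : IsRigid T'.obj₂) : Nonempty (T.obj₂ ≅ T'.obj₂) := by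
  have hT'' : Triangle.mk (e₁.hom ≫ T'.mor₁) (T'.mor₂ ≫ e₃.inv)
      (e₃.hom ≫ T'.mor₃ ≫ e₁.inv⟦(1 : ℤ)⟧') ∈ distTriang C :=
    isomorphic_distinguished _ hT' _ (Triangle.isoMk _ _ e₁ (Iso.refl _) e₃
      (by simp [Triangle.mk]) (by simp [Triangle.mk]) (by simp [Triangle.mk, ← Functor.map_comp]))
  have hw := surjective_orbitTangent_mor₃ T hT hY
  have hw'' := surjective_orbitTangent_mor₃ _ hT'' hY' (hXZ := hXZ)
  obtain ⟨e⟩ :=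
    nonempty_arrow_iso_of_unitsOrbitRel (unitsOrbitRel_of_surjective_orbitTangent hw hw'')
  exact (nonempty_iso_obj₂_of_arrow_iso_mor₃ _ _ hT hT'' e :)

end CategoryTheory.Pretriangulated

theorem stmt_19 {C : Type*} [Category C] [Preadditive C] [Linear ℂ C]
    [HasZeroObject C] [HasShift C ℤ] [∀ n : ℤ, (shiftFunctor C n).Additive]
    [Pretriangulated C] [HasFiniteBiproducts C] [∀ X Y : C, FiniteDimensional ℂ (X ⟶ Y)]
    -- K3 category: Serre duality `Hom(X, Y[i]) ≅ Hom(Y, X[2 - i])^*`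
    (hSerre : ∀ (X Y : C) (i : ℤ), finrank ℂ (X ⟶ Y⟦i⟧) = finrank ℂ (Y ⟶ X⟦2 - i⟧))
    (σ : Slicing C)
    (f : C ⥤ C) [f.IsEquivalence] [f.CommShift ℤ] [f.IsTriangulated]
    -- `f` fixes every `σ`-stable spherical object up to isomorphism
    (hfix : ∀ (A : C) (φ : ℝ), IsStableOfPhase σ A φ → IsSpherical ℂ A →
      Nonempty (f.obj A ≅ A))
    -- every rigid object admits a filtration with cones `Aᵢ^{⊕ mᵢ}`, `Aᵢ` stable
    -- spherical, and `Hom(Eᵢ, Aᵢ₊₁) = 0`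
    (hfilt : ∀ E : C, IsRigid E → ∃ (n : ℕ) (Eobj : Fin (n + 1) → C) (A : Fin n → C)
      (m : Fin n → ℕ)
      (u : ∀ i : Fin n, Eobj i.castSucc ⟶ Eobj i.succ)
      (v : ∀ i : Fin n, Eobj i.succ ⟶ ⨁ fun _ : Fin (m i) => A i)
      (w : ∀ i : Fin n, (⨁ fun _ : Fin (m i) => A i) ⟶ (Eobj i.castSucc)⟦(1 : ℤ)⟧),
      IsZero (Eobj 0) ∧ Nonempty (Eobj (Fin.last n) ≅ E) ∧
        (∀ i : Fin n, Triangle.mk (u i) (v i) (w i) ∈ distTriang C) ∧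
        (∀ i : Fin n, ∃ φ : ℝ, IsStableOfPhase σ (A i) φ ∧ IsSpherical ℂ (A i)) ∧
        (∀ (i : Fin n) (ψ : Eobj i.castSucc ⟶ A i), ψ = 0)) :
    ∀ E : C, IsRigid E → Nonempty (f.obj E ≅ E) := by
  intro E hE
  obtain ⟨n, Eobj, A, m, u, v, w, hzero, ⟨eE⟩, htri, hstab, hvan⟩ := hfilt E hE
  have hXZ (i : Fin n) : Subsingleton (Eobj i.castSucc ⟶ ⨁ fun _ : Fin (m i) => A i) :=
    have : Subsingleton (Eobj i.castSucc ⟶ A i) := ⟨fun a b => (hvan i a).trans (hvan i b).symm⟩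
    inferInstance
  have hrigid (i : Fin (n + 1)) : IsRigid (Eobj i) := by
    induction i using Fin.reverseInduction with
    | last => exact hE.of_iso eE.symm
    | cast i ih =>
      exact isRigid_obj₁_of_distinguished _ (htri i) ih (hXZ := hXZ i)
        (hZX := subsingleton_shift_hom_of_serre hSerre (hXZ := hXZ i))
  have hfixed (i : Fin (n + 1)) : Nonempty (f.obj (Eobj i) ≅ Eobj i) := by
    induction i using Fin.induction with
    | zero => exact ⟨(f.map_isZero hzero).iso hzero⟩
    | succ i ih =>
      obtain ⟨φ, hstable, hspherical⟩ := hstab i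
      obtain ⟨β⟩ := hfix _ φ hstable hspherical
      obtain ⟨e⟩ := nonempty_iso_obj₂_of_isRigid _ _ (htri i) (f.map_distinguished _ (htri i))
        ih.some.symm (f.mapBiproduct _ ≪≫ biproduct.mapIso fun _ => β).symm (hrigid _)
        ((hrigid _).map f) (hXZ := hXZ i)
      exact ⟨e.symm⟩
  exact ⟨f.mapIso eE.symm ≪≫ (hfixed (Fin.last n)).some ≪≫ eE⟩
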